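/- Let H be a real Hilbert space and {P_t}_{t≥0} a semigroup of continuous linear operators on H (P_0 = id, P_{s+t} = P_s ∘ P_t for all s,t ≥ 0) such that the operator norm of each P_t is at most 1. Denote by P_t* the Hilbert-space adjoint of P_t. Then for every x ∈ H, α > 0 and t > 0: ∫_t^∞ e^{−αs} ‖P_s* x‖² ds ≤ (e^{tα} − 1)^{−1} · ∫₀^t e^{−αs} ‖P_s* x‖² ds. -/

import Mathlib

open MeasureTheory Set Filter
open scoped ENNReal

/-! Since `P_{s+t}* = P_t* P_s*` and `‖P_t*‖ = ‖P_t‖ ≤ 1`, the integrand `f` satisfies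
`f (s + t) ≤ e^{-αt} f s`. Cutting `(t, ∞)` into the intervals `((n+1)t, (n+2)t]` and translating
each of them back to `(0, t]` bounds the left-hand side by
`∑ₙ e^{-α(n+1)t} ∫_{(0,t]} f = (e^{tα} - 1)⁻¹ ∫_{(0,t]} f`. -/

theorem Real.exp_neg_div_one_sub_exp_neg (u : ℝ) :
    Real.exp (-u) / (1 - Real.exp (-u)) = (Real.exp u - 1)⁻¹ := by
  rw [← mul_div_mul_right _ _ (Real.exp_ne_zero u), sub_mul, ← Real.exp_add, neg_add_cancel,
    Real.exp_zero, one_mul, one_div]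

theorem ENNReal.ofReal_mul_inv_one_sub_ofReal {q : ℝ} (hq0 : 0 ≤ q) (hq1 : q < 1) :
    ENNReal.ofReal q * (1 - ENNReal.ofReal q)⁻¹ = ENNReal.ofReal (q / (1 - q)) := by
  rw [← ENNReal.ofReal_one, ← ENNReal.ofReal_sub _ hq0, ← ENNReal.ofReal_inv_of_pos (by linarith),
    ← ENNReal.ofReal_mul hq0, div_eq_mul_inv]

namespace ContinuousLinearMap

variable {𝕜 E F G : Type*} [RCLike 𝕜] [NormedAddCommGroup E] [InnerProductSpace 𝕜 E]
  [NormedAddCommGroup F] [InnerProductSpace 𝕜 F] [NormedAddCommGroup G] [InnerProductSpace 𝕜 G]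
  [CompleteSpace E] [CompleteSpace F] [CompleteSpace G]

theorem norm_adjoint_comp_apply_le (A : F →L[𝕜] G) {B : E →L[𝕜] F}
    (hB : ‖B‖ ≤ 1) (x : G) : ‖adjoint (A ∘L B) x‖ ≤ ‖adjoint A x‖ := by
  have hB' : ‖adjoint B‖ ≤ 1 := by rwa [LinearIsometryEquiv.norm_map]
  simpa [adjoint_comp] using (adjoint B).le_of_opNorm_le hB' (adjoint A x)

end ContinuousLinearMap

theorem setLIntegral_Ioc_comp_add_right (f : ℝ → ℝ≥0∞) (a b c : ℝ) :
    ∫⁻ s in Ioc a b, f (s + c) = ∫⁻ s in Ioc (a + c) (b + c), f s := by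
  have := (measurePreserving_add_right volume c).setLIntegral_comp_preimage_emb
    (measurableEmbedding_addRight c) f (Ioc (a + c) (b + c))
  rwa [preimage_add_const_Ioc, add_sub_cancel_right, add_sub_cancel_right] at this

theorem le_pow_mul_of_add_le_mul {f : ℝ → ℝ≥0∞} {t : ℝ} {r : ℝ≥0∞} (ht : 0 ≤ t)
    (hf : ∀ s > 0, f (s + t) ≤ r * f s) (n : ℕ) {s : ℝ} (hs : 0 < s) :
    f (s + n * t) ≤ r ^ n * f s := by
  induction n with
  | zero => simp
  | succ n ih =>
    calc f (s + (n + 1 : ℕ) * t) = f ((s + n * t) + t) := by push_cast; ring_nf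
      _ ≤ r * f (s + n * t) := hf _ (by positivity)
      _ ≤ r * (r ^ n * f s) := by gcongr
      _ = r ^ (n + 1) * f s := by ring

theorem lintegral_Ioi_le_of_add_le_mul {f : ℝ → ℝ≥0∞} {t : ℝ} {r : ℝ≥0∞} (ht : 0 < t)
    (hr : r ≠ ∞) (hf : ∀ s > 0, f (s + t) ≤ r * f s) :
    ∫⁻ s in Ioi t, f s ≤ r * (1 - r)⁻¹ * ∫⁻ s in Ioc 0 t, f s := by
  set g : ℕ → ℝ := fun n => (n + 1) * t with hg
  have hmono : Monotone g := fun m n hmn => by simp only [hg]; gcongr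
  have hunion : ⋃ n : ℕ, Ioc (g n) (g (n + 1)) = Ioi t := by
    have hg_top : Tendsto g atTop atTop :=
      (tendsto_atTop_add_const_right _ 1 tendsto_natCast_atTop_atTop).atTop_mul_const ht
    simpa [hg] using iUnion_Ioc_map_succ_eq_Ioi (fun n => hmono bot_le)
      (not_bddAbove_of_tendsto_atTop hg_top)
  calc ∫⁻ s in Ioi t, f s
      = ∑' n : ℕ, ∫⁻ s in Ioc (g n) (g (n + 1)), f s := by
        rw [← hunion, lintegral_iUnion (fun _ => measurableSet_Ioc)]
        exact hmono.pairwise_disjoint_on_Ioc_succ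
    _ = ∑' n : ℕ, ∫⁻ s in Ioc 0 t, f (s + (n + 1 : ℕ) * t) := by
        refine tsum_congr fun n => ?_
        rw [setLIntegral_Ioc_comp_add_right]
        simp only [hg]
        push_cast
        congr 3 <;> ring
    _ ≤ ∑' n : ℕ, ∫⁻ s in Ioc 0 t, r ^ (n + 1) * f s :=
        ENNReal.tsum_le_tsum fun n => setLIntegral_mono' measurableSet_Ioc fun s hs =>
          le_pow_mul_of_add_le_mul ht.le hf _ hs.1
    _ = r * (1 - r)⁻¹ * ∫⁻ s in Ioc 0 t, f s := by
        simp only [lintegral_const_mul' _ _ (ENNReal.pow_ne_top hr)]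
        rw [ENNReal.tsum_mul_right, ENNReal.tsum_geometric_add_one]

theorem ofReal_exp_mul_norm_adjoint_sq_add_le {H : Type*} [NormedAddCommGroup H]
    [InnerProductSpace ℝ H] [CompleteSpace H] (P : ℝ → H →L[ℝ] H) {s t : ℝ}
    (hP : P (s + t) = (P s).comp (P t)) (hPt : ‖P t‖ ≤ 1) (x : H) (α : ℝ) :
    ENNReal.ofReal (Real.exp (-(α * (s + t))) * ‖ContinuousLinearMap.adjoint (P (s + t)) x‖ ^ 2) ≤
      ENNReal.ofReal (Real.exp (-(α * t))) *
        ENNReal.ofReal (Real.exp (-(α * s)) * ‖ContinuousLinearMap.adjoint (P s) x‖ ^ 2) := by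
  rw [← ENNReal.ofReal_mul (Real.exp_pos _).le, hP,
    show -(α * (s + t)) = -(α * t) + -(α * s) by ring, Real.exp_add, mul_assoc]
  gcongr
  exact (P s).norm_adjoint_comp_apply_le hPt x

theorem stmt_9_general {H : Type*} [NormedAddCommGroup H] [InnerProductSpace ℝ H] [CompleteSpace H]
    (P : ℝ → H →L[ℝ] H)
    (hsemi : ∀ s ≥ (0 : ℝ), ∀ t ≥ (0 : ℝ), P (s + t) = (P s).comp (P t))
    (hcontr : ∀ t ≥ (0 : ℝ), ‖P t‖ ≤ 1) :
    ∀ x : H, ∀ α > (0 : ℝ), ∀ t > (0 : ℝ),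
      ∫⁻ s in Set.Ioi t,
          ENNReal.ofReal (Real.exp (-(α * s)) * ‖ContinuousLinearMap.adjoint (P s) x‖ ^ 2) ≤
        ENNReal.ofReal ((Real.exp (t * α) - 1)⁻¹) *
          ∫⁻ s in Set.Ioc (0 : ℝ) t,
            ENNReal.ofReal (Real.exp (-(α * s)) * ‖ContinuousLinearMap.adjoint (P s) x‖ ^ 2) := by
  intro x α hα t ht
  have hq : Real.exp (-(α * t)) < 1 := Real.exp_lt_one_iff.2 (neg_lt_zero.2 (mul_pos hα ht))
  have key := lintegral_Ioi_le_of_add_le_mul ht ENNReal.ofReal_ne_top fun s hs =>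
    ofReal_exp_mul_norm_adjoint_sq_add_le P (hsemi s hs.le t ht.le) (hcontr t ht.le) x α
  rwa [ENNReal.ofReal_mul_inv_one_sub_ofReal (Real.exp_pos _).le hq, mul_comm α t,
    Real.exp_neg_div_one_sub_exp_neg] at key

/-- for a contraction semigroup `{P_t}` on a real Hilbert space, every `x ∈ H`,
`α > 0` and `t > 0`:
`∫_t^∞ e^{−αs} ‖P_s* x‖² ds ≤ (e^{tα} − 1)⁻¹ ∫₀^t e^{−αs} ‖P_s* x‖² ds`. -/
theorem stmt_9 {H : Type*} [NormedAddCommGroup H] [InnerProductSpace ℝ H] [CompleteSpace H]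
    (P : ℝ → H →L[ℝ] H)
    (hP0 : P 0 = ContinuousLinearMap.id ℝ H)
    (hsemi : ∀ s ≥ (0 : ℝ), ∀ t ≥ (0 : ℝ), P (s + t) = (P s).comp (P t))
    (hcontr : ∀ t ≥ (0 : ℝ), ‖P t‖ ≤ 1) :
    ∀ x : H, ∀ α > (0 : ℝ), ∀ t > (0 : ℝ),
      ∫⁻ s in Set.Ioi t,
          ENNReal.ofReal (Real.exp (-(α * s)) * ‖ContinuousLinearMap.adjoint (P s) x‖ ^ 2) ≤
        ENNReal.ofReal ((Real.exp (t * α) - 1)⁻¹) *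
          ∫⁻ s in Set.Ioc (0 : ℝ) t,
            ENNReal.ofReal (Real.exp (-(α * s)) * ‖ContinuousLinearMap.adjoint (P s) x‖ ^ 2) :=
  stmt_9_general P hsemi hcontr
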